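/- Let R be a commutative ring, and let I_1,…,I_r, J be ideals with I_i ⊆ I_i :_R J^∞ for each i. If the multigraded algebra ⊕_{n∈ℕ^r}(I^n :_R J^∞) is standard, i.e. (I^n :_R J^∞) = (I_1 :_R J^∞)^{n_1}⋯(I_r :_R J^∞)^{n_r} for all n, then setting Q = (I_1:J^∞)⋯(I_r:J^∞) one has Q^n :_R J^∞ = Q^n for all n ∈ ℕ. -/

import Mathlib

/-!
Taking all exponents equal to `n`, standardness says that `Q^n` is itself the saturation of
`∏ I_i^n`, so it suffices that saturation is idempotent. In a Noetherian ring the chain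
`I : J^k` stabilises, so `I : J^∞ = I : J^N` for some `N`, and then
`(I : J^∞) : J^k = I : J^(N+k) ⊆ I : J^∞`.
-/

namespace Ideal

variable {R : Type*} [CommRing R]

theorem colon_colon (A B C : Ideal R) :
    (A.colon (B : Set R)).colon (C : Set R) = A.colon ((B * C : Ideal R) : Set R) := by
  ext x
  simp only [Submodule.mem_colon, smul_eq_mul]
  constructor
  · intro hx y hy
    refine Submodule.mul_induction_on hy (fun b hb c hc => ?_) (fun y z hy hz => ?_)
    · rw [← mul_assoc, mul_right_comm]
      exact hx c hc b hb
    · rw [mul_add]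
      exact A.add_mem hy hz
  · intro hx c hc b hb
    rw [mul_right_comm, mul_assoc]
    exact hx _ (mul_mem_mul hb hc)

theorem colon_pow_monotone (A J : Ideal R) :
    Monotone fun k : ℕ => A.colon ((J ^ k : Ideal R) : Set R) :=
  fun _ _ hkl => Submodule.colon_mono le_rfl (pow_le_pow_right hkl)

def saturation (I J : Ideal R) : Ideal R := ⨆ k : ℕ, I.colon ((J ^ k : Ideal R) : Set R)

theorem colon_pow_le_saturation (I J : Ideal R) (k : ℕ) :
    I.colon ((J ^ k : Ideal R) : Set R) ≤ I.saturation J :=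
  le_iSup (fun k : ℕ => I.colon ((J ^ k : Ideal R) : Set R)) k

theorem le_saturation (I J : Ideal R) : I ≤ I.saturation J := by
  simpa using I.colon_pow_le_saturation J 0

theorem exists_saturation_eq_colon_pow [IsNoetherianRing R] (I J : Ideal R) :
    ∃ N : ℕ, I.saturation J = I.colon ((J ^ N : Ideal R) : Set R) :=
  ⟨_, WellFoundedGT.iSup_eq_monotonicSequenceLimit ⟨_, colon_pow_monotone I J⟩⟩

theorem saturation_saturation [IsNoetherianRing R] (I J : Ideal R) :
    (I.saturation J).saturation J = I.saturation J := by
  obtain ⟨N, hN⟩ := I.exists_saturation_eq_colon_pow J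
  refine le_antisymm (iSup_le fun k => ?_) (le_saturation _ _)
  calc (I.saturation J).colon ((J ^ k : Ideal R) : Set R)
      = I.colon ((J ^ (N + k) : Ideal R) : Set R) := by rw [hN, colon_colon, pow_add]
    _ ≤ I.saturation J := colon_pow_le_saturation I J (N + k)

end Ideal

theorem saturation_Q_pow_eq_general {R : Type*} [CommRing R] [IsNoetherianRing R] (r : ℕ)
    (I : Fin r → Ideal R) (J : Ideal R)
    (hstd : ∀ n : Fin r → ℕ,
      (⨆ k : ℕ, (∏ i, (I i) ^ n i).colon ((J ^ k : Ideal R) : Set R)) =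
        ∏ i, (⨆ k : ℕ, (I i).colon ((J ^ k : Ideal R) : Set R)) ^ n i) :
    ∀ n : ℕ, (⨆ k : ℕ, ((∏ i, ⨆ l : ℕ, (I i).colon ((J ^ l : Ideal R) : Set R)) ^ n).colon ((J ^ k : Ideal R) : Set R)) =
      (∏ i, ⨆ l : ℕ, (I i).colon ((J ^ l : Ideal R) : Set R)) ^ n := by
  intro n
  have hQ : (∏ i, (I i).saturation J) ^ n = (∏ i, I i ^ n).saturation J := by
    rw [← Finset.prod_pow]
    exact (hstd fun _ => n).symm
  change ((∏ i, (I i).saturation J) ^ n).saturation J = (∏ i, (I i).saturation J) ^ n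
  rw [hQ, Ideal.saturation_saturation]

/-- If the symbolic multi-Rees algebra is standard, i.e.
`I^n : J^∞ = (I_1:J^∞)^{n_1}⋯(I_r:J^∞)^{n_r}` for all `n`, then for
`Q = (I_1:J^∞)⋯(I_r:J^∞)` one has `Q^n : J^∞ = Q^n` for all `n`. -/
theorem saturation_Q_pow_eq {R : Type*} [CommRing R] [IsNoetherianRing R] (r : ℕ)
    (I : Fin r → Ideal R) (J : Ideal R)
    (hsub : ∀ i, I i ≤ ⨆ n : ℕ, (I i).colon ((J ^ n : Ideal R) : Set R))
    (hstd : ∀ n : Fin r → ℕ,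
      (⨆ k : ℕ, (∏ i, (I i) ^ n i).colon ((J ^ k : Ideal R) : Set R)) =
        ∏ i, (⨆ k : ℕ, (I i).colon ((J ^ k : Ideal R) : Set R)) ^ n i) :
    ∀ n : ℕ, (⨆ k : ℕ, ((∏ i, ⨆ l : ℕ, (I i).colon ((J ^ l : Ideal R) : Set R)) ^ n).colon ((J ^ k : Ideal R) : Set R)) =
      (∏ i, ⨆ l : ℕ, (I i).colon ((J ^ l : Ideal R) : Set R)) ^ n :=
  saturation_Q_pow_eq_general r I J hstd
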